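/- Let N ≥ 1, let 0 = t₀ < t₁ < ... < t_N be real numbers, and for γ < 1 define a_i(γ) = (t_i^{1−γ} − t_{i−1}^{1−γ})/(1 − γ) for i = 1, ..., N. Let Γ ⊆ (−∞, 1) be a set containing a nonempty open interval. Then there exist γ₀, γ₁, ..., γ_N ∈ Γ such that the N×N matrix with (i, j) entry a_i(γ_j) − a_i(γ₀) is invertible; equivalently, the convex hull of {(a₁(γ), ..., a_N(γ)) : γ ∈ Γ} ⊆ ℝ^N has dimension N. (This is the technical claim proved in the appendix for the paper's theorem that the full trajectory is the unique sufficient statistic for the propagator model with power-law kernel.) -/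

import Mathlib

/-!
Multiply a relation `∑ cᵢ aᵢ(γ) = d` by `s = 1 - γ` and sum by parts (using `t₀ ^ s = 0`): it
becomes `∑ₖ (cₖ - cₖ₊₁) exp (s log tₖ) = d s`, a relation between `s` and exponentials with
distinct rates `log tₖ`. The derivatives of `∑ₖ wₖ exp (rₖ s)` at a point form a Vandermonde
system in the `wₖ exp (rₖ s)`, so an exponential sum vanishing near a point has zero
coefficients; two derivatives remove the linear term `d s`. Hence all `cᵢ` vanish, the
differences `a(γ) - a(γ₀)` for `γ` in the interval span `ℝ^N`, and a basis chosen among them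
gives the invertible matrix.
-/

open Real Filter Topology Finset Matrix Submodule

theorem span_eq_top_of_dotProduct_orthogonal_eq_zero {K ι : Type*} [Field K] [Fintype ι]
    {s : Set (ι → K)} (h : ∀ c : ι → K, (∀ v ∈ s, c ⬝ᵥ v = 0) → c = 0) :
    span K s = ⊤ := by
  classical
  rw [← dualAnnihilator_eq_bot_iff, eq_bot_iff]
  intro φ hφ
  rw [mem_dualAnnihilator] at hφ
  set c : ι → K := fun i => φ fun j => if i = j then 1 else 0
  have hφc (v : ι → K) : φ v = c ⬝ᵥ v := by
    rw [LinearMap.pi_apply_eq_sum_univ, dotProduct]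
    simp only [c, smul_eq_mul, mul_comm]
  have hc : c = 0 := h c fun v hv => (hφc v).symm.trans (hφ v (subset_span hv))
  ext v
  simp [hφc, hc]

theorem exists_isUnit_det_of_span_image_eq_top {K α : Type*} [Field K] {m : ℕ} {S : Set α}
    {F : α → Fin m → K} (h : span K (F '' S) = ⊤) :
    ∃ x : Fin m → α, (∀ j, x j ∈ S) ∧ IsUnit (Matrix.of fun i j => F (x j) i).det := by
  let b₀ := Module.Basis.ofSpan h.ge
  let b := b₀.reindex (b₀.indexEquiv (Pi.basisFun K (Fin m)))
  have hb (j : Fin m) : ∃ x ∈ S, F x = b j := by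
    simpa [b, b₀] using Module.Basis.ofSpan_subset h.ge ⟨(b₀.indexEquiv _).symm j, rfl⟩
  choose x hxS hx using hb
  refine ⟨x, hxS, ?_⟩
  rw [← isUnit_iff_isUnit_det, ← linearIndependent_cols_iff_isUnit]
  have hcols : (Matrix.of fun i j => F (x j) i).col = b := by
    ext j i
    simp [hx]
  rw [hcols]
  exact b.linearIndependent

theorem iteratedDeriv_sum_mul_exp {ι : Type*} [Fintype ι] (w r : ι → ℝ) (n : ℕ) :
    iteratedDeriv n (fun s => ∑ i, w i * exp (r i * s)) =
      fun s => ∑ i, w i * r i ^ n * exp (r i * s) := by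
  funext s
  rw [iteratedDeriv_fun_sum fun i _ => by fun_prop]
  simp [iteratedDeriv_const_mul_field, mul_assoc]

theorem eq_zero_of_sum_mul_exp_eventuallyEq_zero {n : ℕ} {r w : Fin n → ℝ}
    (hr : Function.Injective r) {s₀ : ℝ}
    (h : (fun s => ∑ i, w i * exp (r i * s)) =ᶠ[𝓝 s₀] 0) : w = 0 := by
  have hmoments (k : Fin n) : ∑ i, w i * exp (r i * s₀) * r i ^ (k : ℕ) = 0 := by
    have := (h.iteratedDeriv k).eq_of_nhds
    rw [iteratedDeriv_sum_mul_exp] at this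
    simpa [mul_right_comm _ (exp _)] using this
  funext i
  simpa using congrFun (Matrix.eq_zero_of_forall_pow_sum_mul_pow_eq_zero hr hmoments) i

theorem eq_zero_of_sum_mul_exp_eventuallyEq_const_mul {n : ℕ} {r w : Fin n → ℝ}
    (hr : Function.Injective r) {s₀ d : ℝ}
    (h : (fun s => ∑ i, w i * exp (r i * s)) =ᶠ[𝓝 s₀] fun s => d * s) : d = 0 ∧ w = 0 := by
  have hw_r_sq : (fun i => w i * r i ^ 2) = 0 := by
    refine eq_zero_of_sum_mul_exp_eventuallyEq_zero (s₀ := s₀) hr ?_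
    have hlinear : iteratedDeriv 2 (fun s => d * s) = 0 := by
      ext; simp [iteratedDeriv_succ]
    simpa [iteratedDeriv_sum_mul_exp, hlinear] using h.iteratedDeriv 2
  have hw_r (i : Fin n) : w i * r i = 0 := by
    simpa using congrFun hw_r_sq i
  have hd : d = 0 := by
    have := (h.iteratedDeriv 1).eq_of_nhds
    rw [iteratedDeriv_sum_mul_exp] at this
    simpa [hw_r] using this.symm
  subst hd
  exact ⟨rfl, eq_zero_of_sum_mul_exp_eventuallyEq_zero hr (by simpa [Pi.zero_def] using h)⟩

theorem sum_range_mul_sub_eq {R : Type*} [CommRing R] (c T : ℕ → R) (n : ℕ) :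
    ∑ i ∈ range n, c i * (T (i + 1) - T i) =
      ∑ i ∈ range n, (c i - c (i + 1)) * T (i + 1) + c n * T n - c 0 * T 0 := by
  induction n with
  | zero => simp
  | succ n ih => rw [sum_range_succ, ih, sum_range_succ]; ring

/-- `∫_{t i}^{t (i+1)} s^(-γ) ds` for `γ < 1` and `0 ≤ t i`: the paper's `a_{i+1}(γ)`. -/
noncomputable def powerKernelIntegral (t : ℕ → ℝ) (i : ℕ) (γ : ℝ) : ℝ :=
  (t (i + 1) ^ (1 - γ) - t i ^ (1 - γ)) / (1 - γ)

theorem eq_zero_of_sum_mul_powerKernelIntegral_eventuallyEq_const {N : ℕ} {t : ℕ → ℝ}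
    (ht0 : t 0 = 0) (hmono : ∀ i < N, t i < t (i + 1)) {c : ℕ → ℝ} (hcN : c N = 0)
    {γ₀ d : ℝ} (hγ₀ : γ₀ < 1)
    (h : ∀ᶠ γ in 𝓝 γ₀, ∑ i ∈ range N, c i * powerKernelIntegral t i γ = d) :
    ∀ i < N, c i = 0 := by
  have ht : StrictMonoOn t (Set.Iic N) := strictMonoOn_Iic_of_lt_succ fun m hm => by
    simpa using hmono m hm
  have htpos (k : Fin N) : 0 < t (k + 1) :=
    ht0 ▸ ht (by simp) (by simp [k.isLt]) (Nat.succ_pos k)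
  set r : Fin N → ℝ := fun k => log (t (k + 1))
  have hr : Function.Injective r := fun j k hjk =>
    Fin.ext <| Nat.succ_injective <| ht.injOn (by simp [j.isLt]) (by simp [k.isLt]) <|
      log_injOn_pos (htpos j) (htpos k) hjk
  have hexp : ∀ᶠ γ in 𝓝 γ₀,
      ∑ k : Fin N, (c k - c (k + 1)) * exp (r k * (1 - γ)) = d * (1 - γ) := by
    filter_upwards [h, Iio_mem_nhds hγ₀] with γ hγ hγ1
    have hs : 1 - γ ≠ 0 := by linarith [Set.mem_Iio.1 hγ1]
    rw [← hγ, sum_mul]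
    have hcleared (i : ℕ) : c i * powerKernelIntegral t i γ * (1 - γ) =
        c i * (t (i + 1) ^ (1 - γ) - t i ^ (1 - γ)) := by
      rw [powerKernelIntegral]; field_simp
    rw [sum_congr rfl fun i _ => hcleared i,
      sum_range_mul_sub_eq c (fun j => t j ^ (1 - γ)), hcN, ht0, zero_rpow hs]
    simp only [zero_mul, mul_zero, add_zero, sub_zero]
    rw [← Fin.sum_univ_eq_sum_range (fun i => (c i - c (i + 1)) * t (i + 1) ^ (1 - γ))]
    simp only [r, rpow_def_of_pos (htpos _)]
  have hrelation : (fun s => ∑ k : Fin N, (c k - c (k + 1)) * exp (r k * s)) =ᶠ[𝓝 (1 - γ₀)]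
      fun s => d * s := by
    have := ((continuous_sub_left (1 : ℝ)).tendsto' (1 - γ₀) γ₀ (by ring)).eventually hexp
    simpa [EventuallyEq] using this
  have hdiff := (eq_zero_of_sum_mul_exp_eventuallyEq_const_mul hr hrelation).2
  intro i hi
  refine Nat.decreasingInduction (motive := fun m _ => c m = 0) (fun k hk hck => ?_) hcN hi.le
  simpa [hck, sub_eq_zero] using congrFun hdiff ⟨k, hk⟩

theorem span_image_powerKernelIntegral_sub_eq_top {N : ℕ} {t : ℕ → ℝ} (ht0 : t 0 = 0)
    (hmono : ∀ i < N, t i < t (i + 1)) {S : Set ℝ} (hS : IsOpen S) (hS1 : S ⊆ Set.Iio 1)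
    {γ₀ : ℝ} (hγ₀ : γ₀ ∈ S) :
    span ℝ ((fun γ (i : Fin N) => powerKernelIntegral t i γ - powerKernelIntegral t i γ₀) '' S)
      = ⊤ := by
  refine span_eq_top_of_dotProduct_orthogonal_eq_zero fun c hc => ?_
  let c' : ℕ → ℝ := fun i => if h : i < N then c ⟨i, h⟩ else 0
  have hsum (γ : ℝ) : c ⬝ᵥ (fun i : Fin N => powerKernelIntegral t i γ) =
      ∑ i ∈ range N, c' i * powerKernelIntegral t i γ := by
    rw [dotProduct, ← Fin.sum_univ_eq_sum_range]
    simp [c']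
  have hconst : ∀ᶠ γ in 𝓝 γ₀, ∑ i ∈ range N, c' i * powerKernelIntegral t i γ =
      c ⬝ᵥ fun i : Fin N => powerKernelIntegral t i γ₀ := by
    filter_upwards [hS.mem_nhds hγ₀] with γ hγ
    rw [← hsum, ← sub_eq_zero, ← dotProduct_sub]
    exact hc _ ⟨γ, hγ, rfl⟩
  have hc' := eq_zero_of_sum_mul_powerKernelIntegral_eventuallyEq_const ht0 hmono
    (by simp [c']) (hS1 hγ₀) hconst
  ext i
  simpa [c'] using hc' i i.isLt

theorem propagator_full_dimensional_general (N : ℕ) (t : ℕ → ℝ)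
    (ht0 : t 0 = 0) (hmono : ∀ i, i < N → t i < t (i + 1))
    (Γ : Set ℝ) (hΓsub : Γ ⊆ Set.Iio 1)
    (hΓopen : ∃ l u : ℝ, l < u ∧ Set.Ioo l u ⊆ Γ) :
    ∃ γ : Fin (N + 1) → ℝ, (∀ j, γ j ∈ Γ) ∧
      IsUnit (Matrix.det (Matrix.of fun i j : Fin N =>
        (t (i.val + 1) ^ (1 - γ j.succ) - t i.val ^ (1 - γ j.succ)) / (1 - γ j.succ)
          - (t (i.val + 1) ^ (1 - γ 0) - t i.val ^ (1 - γ 0)) / (1 - γ 0))) := by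
  obtain ⟨l, u, hlu, hluΓ⟩ := hΓopen
  obtain ⟨γ₀, hγ₀⟩ := Set.nonempty_Ioo.2 hlu
  obtain ⟨x, hx, hdet⟩ := exists_isUnit_det_of_span_image_eq_top <|
    span_image_powerKernelIntegral_sub_eq_top (N := N) ht0 hmono isOpen_Ioo
      (hluΓ.trans hΓsub) hγ₀
  refine ⟨Fin.cons γ₀ x, Fin.cases (hluΓ hγ₀) fun j => hluΓ (hx j), ?_⟩
  simpa [powerKernelIntegral] using hdet

/-- Full-dimensionality of the natural-parameter curve of the discretized propagator
model with power-law kernel: there exist `γ₀, γ₁, ..., γ_N ∈ Γ` making the `N×N`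
matrix with `(i,j)` entry `a_i(γ_j) − a_i(γ₀)` invertible, where
`a_i(γ) = (t_i^{1−γ} − t_{i−1}^{1−γ})/(1 − γ)`. -/
theorem propagator_full_dimensional (N : ℕ) (hN : 1 ≤ N) (t : ℕ → ℝ)
    (ht0 : t 0 = 0) (hmono : ∀ i, i < N → t i < t (i + 1))
    (Γ : Set ℝ) (hΓsub : Γ ⊆ Set.Iio 1)
    (hΓopen : ∃ l u : ℝ, l < u ∧ Set.Ioo l u ⊆ Γ) :
    ∃ γ : Fin (N + 1) → ℝ, (∀ j, γ j ∈ Γ) ∧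
      IsUnit (Matrix.det (Matrix.of fun i j : Fin N =>
        (t (i.val + 1) ^ (1 - γ j.succ) - t i.val ^ (1 - γ j.succ)) / (1 - γ j.succ)
          - (t (i.val + 1) ^ (1 - γ 0) - t i.val ^ (1 - γ 0)) / (1 - γ 0))) :=
  propagator_full_dimensional_general N t ht0 hmono Γ hΓsub hΓopen
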